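/- arXiv:math/0512638 — 4 statements merged into one kernel-verified Lean document; each statement's English description precedes it below -/
import Mathlib

section
/- Contraction lemma: Let X be a metric space with base point x₀, and let g be an isometry of X. Suppose V⁺, V⁻ ⊆ X are sets with g x₀ ∈ V⁺ and g⁻¹ x₀ ∈ V⁻. Then g maps the complement of the halfspace H(V⁻) = {z : d(z,V⁻) ≤ d(z,x₀)} into the halfspace H(V⁺) = {z : d(z,V⁺) ≤ d(z,x₀)}. -/
/-- Contraction lemma: if `g x₀ ∈ V⁺` and `g⁻¹ x₀ ∈ V⁻`, then `g` maps the
complement of the halfspace `H(V⁻) = {z | d(z,V⁻) ≤ d(z,x₀)}` into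
`H(V⁺) = {z | d(z,V⁺) ≤ d(z,x₀)}`. -/
theorem stmt3 {X : Type*} [MetricSpace X] (x₀ : X) (g : X ≃ᵢ X)
    (Vp Vm : Set X) (hp : g x₀ ∈ Vp) (hm : g.symm x₀ ∈ Vm) :
    ∀ z : X, z ∉ {w : X | Metric.infDist w Vm ≤ dist w x₀} →
      g z ∈ {w : X | Metric.infDist w Vp ≤ dist w x₀} := by
  intro z hz
  simp only [Set.mem_setOf_eq, not_le] at hz ⊢
  have h1 : Metric.infDist z Vm ≤ dist z (g.symm x₀) := Metric.infDist_le_dist_of_mem hm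
  have h2 : dist z x₀ < dist z (g.symm x₀) := lt_of_lt_of_le hz h1
  refine le_of_lt ?_
  calc Metric.infDist (g z) Vp ≤ dist (g z) (g x₀) := Metric.infDist_le_dist_of_mem hp
    _ = dist z x₀ := g.dist_eq z x₀
    _ < dist z (g.symm x₀) := h2
    _ = dist (g z) x₀ := by rw [← g.dist_eq]; simp
end

section
/- Let X be a metric space and let g, h be isometries of X generating a group Γ acting metrically properly (for every x and R, {γ ∈ Γ : d(γ x, x) ≤ R} is finite). Assume g has an axis, i.e. there is a geodesic line c : ℝ → X and d_g > 0 with g(c(t)) = c(t + d_g) for all t, and assume h fixes an endpoint of c, i.e. there is C > 0 with d(h(c(t)), c(t)) < C for all t > 0. Then there is an integer N > 0 such that h commutes with g^N. -/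
private lemma stmt9_aux {G : Type*} [Group G] (a b x : G)
    (hx : b⁻¹ * x * b = (a * b)⁻¹ * x * (a * b)) : x * a = a * x := by
  have h1 : x * (a * b) = (a * b) * ((a * b)⁻¹ * x * (a * b)) := by group
  rw [← hx] at h1
  have h2 : (a * b) * (b⁻¹ * x * b) = a * x * b := by group
  rw [h2, ← mul_assoc] at h1
  exact mul_right_cancel h1

/-- If isometries `g, h` generate a metrically proper group, `g` has an axis `c`
(translated by `d_g > 0`), and `h` fixes an endpoint of `c`
(`d(h(c(t)), c(t)) < C` for all `t > 0`), then `h` commutes with some power `g^N`, `N > 0`. -/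
theorem stmt9 {X : Type*} [MetricSpace X] [CompleteSpace X] (g h : X ≃ᵢ X)
    (hproper : ∀ (x : X) (R : ℝ),
      {γ : Subgroup.closure ({g, h} : Set (X ≃ᵢ X)) | dist ((γ : X ≃ᵢ X) x) x ≤ R}.Finite)
    (c : ℝ → X) (hc : ∀ s t : ℝ, dist (c s) (c t) = |s - t|)
    (dg : ℝ) (hdg : 0 < dg) (haxis : ∀ t : ℝ, g (c t) = c (t + dg))
    (C : ℝ) (hC : 0 < C) (hfix : ∀ t : ℝ, 0 < t → dist (h (c t)) (c t) < C) :
    ∃ N : ℕ, 0 < N ∧ h * g ^ N = g ^ N * h := by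
  set Γ := Subgroup.closure ({g, h} : Set (X ≃ᵢ X)) with hΓ
  have hg : g ∈ Γ := Subgroup.subset_closure (by simp)
  have hh : h ∈ Γ := Subgroup.subset_closure (by simp)
  set G : Γ := ⟨g, hg⟩ with hG
  set H : Γ := ⟨h, hh⟩ with hH
  set f : ℕ → Γ := fun n => (G ^ n)⁻¹ * H⁻¹ * G ^ n with hf
  -- g^n moves c 0 to c (n * dg)
  have hpow : ∀ n : ℕ, (g ^ n) (c 0) = c (n * dg) := by
    intro n
    induction n with
    | zero => simp
    | succ n ih =>
      rw [pow_succ' g n, IsometryEquiv.mul_apply, ih, haxis]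
      push_cast
      ring_nf
  have hcoe : ∀ n : ℕ, ((f n : Γ) : X ≃ᵢ X) = (g ^ n)⁻¹ * h⁻¹ * g ^ n := by
    intro n; simp [hf, hG, hH]
  have hmoves : ∀ n : ℕ, dist (((f (n + 1) : Γ) : X ≃ᵢ X) (c 0)) (c 0) ≤ C := by
    intro n
    rw [hcoe]
    have hpos : (0:ℝ) < ((n : ℝ) + 1) * dg := by positivity
    have hp : (g ^ (n+1)) (c 0) = c (((n:ℝ) + 1) * dg) := by
      have := hpow (n+1); push_cast at this; exact this
    calc dist (((g ^ (n+1))⁻¹ * h⁻¹ * g ^ (n+1)) (c 0)) (c 0)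
        = dist ((g ^ (n+1))⁻¹ (h⁻¹ ((g ^ (n+1)) (c 0)))) (c 0) := rfl
      _ = dist (h⁻¹ ((g ^ (n+1)) (c 0))) ((g ^ (n+1)) (c 0)) := by
          rw [← (g ^ (n+1)).dist_eq ((g ^ (n+1))⁻¹ (h⁻¹ ((g ^ (n+1)) (c 0)))) (c 0)]
          simp
      _ = dist (h ((g ^ (n+1)) (c 0))) ((g ^ (n+1)) (c 0)) := by
          rw [← h.dist_eq (h⁻¹ ((g ^ (n+1)) (c 0))) ((g ^ (n+1)) (c 0))]
          simp [dist_comm]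
      _ ≤ C := by rw [hp]; exact (hfix _ hpos).le
  -- pigeonhole
  obtain ⟨m, -, n, -, hmn, hfeq⟩ :=
    Set.infinite_univ.exists_ne_map_eq_of_mapsTo
      (f := fun n : ℕ => f (n + 1))
      (fun n _ => hmoves n) (hproper (c 0) C)
  -- wlog m < n
  wlog hlt : m < n generalizing m n
  · exact this n m hmn.symm hfeq.symm ((hmn.lt_or_gt).resolve_left hlt)
  refine ⟨n - m, by omega, ?_⟩
  have hfeq' : (g ^ (m+1))⁻¹ * h⁻¹ * g ^ (m+1) = (g ^ (n+1))⁻¹ * h⁻¹ * g ^ (n+1) := by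
    have := congrArg (fun γ : Γ => (γ : X ≃ᵢ X)) hfeq
    simpa [hcoe] using this
  have hsplit : g ^ (n+1) = g ^ (n - m) * g ^ (m+1) := by
    rw [← pow_add]; congr 1; omega
  rw [hsplit] at hfeq'
  have hkey : h⁻¹ * g ^ (n - m) = g ^ (n - m) * h⁻¹ :=
    stmt9_aux (g ^ (n - m)) (g ^ (m+1)) h⁻¹ hfeq'
  have hcomm : Commute h⁻¹ (g ^ (n - m)) := hkey
  exact (hcomm.inv_left).eq
end

section
/- Let X be a complete CAT(0) space with visual boundary ∂X, and let ξ, η ∈ ∂X be represented by unit-speed geodesic rays c₁, c₂ from x₀ with angular distance ∠(ξ,η) < π/2 (where ∠(ξ,η) = sup_p ∠_p(ξ,η)). Then the sequence of projections p_i of c₂(i) onto the ray c₁ is unbounded. -/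
/-- CAT(0): complete geodesic space (existence of midpoints) satisfying the
Bruhat–Tits CN-inequality. -/
def IsCAT0 (X : Type*) [MetricSpace X] : Prop :=
  (∀ x y : X, ∃ m : X, dist x m = dist x y / 2 ∧ dist m y = dist x y / 2) ∧
  ∀ x y z m : X, dist y m = dist y z / 2 → dist m z = dist y z / 2 →
    dist x m ^ 2 ≤ dist x y ^ 2 / 2 + dist x z ^ 2 / 2 - dist y z ^ 2 / 4

/-- A unit-speed geodesic ray from `x₀`. -/
def IsRay {X : Type*} [MetricSpace X] (x₀ : X) (c : ℝ → X) : Prop :=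
  c 0 = x₀ ∧ ∀ s t : ℝ, 0 ≤ s → 0 ≤ t → dist (c s) (c t) = |s - t|

/-- The Euclidean comparison angle at `p` between `a` and `b`. -/
noncomputable def compAngle {X : Type*} [MetricSpace X] (p a b : X) : ℝ :=
  Real.arccos ((dist p a ^ 2 + dist p b ^ 2 - dist a b ^ 2) / (2 * dist p a * dist p b))

/-- The angular distance `∠(ξ,η) = sup_p ∠_p(ξ,η)` between the boundary points of two
rays from the common basepoint `x₀`: in a CAT(0) space it equals the supremum (= limit,
by monotonicity) of the comparison angles at `x₀` of `c₁(t)`, `c₂(t)` as `t → ∞`. -/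
noncomputable def angularDist {X : Type*} [MetricSpace X] (x₀ : X) (c₁ c₂ : ℝ → X) : ℝ :=
  ⨆ t : {t : ℝ // 0 < t}, compAngle x₀ (c₁ t) (c₂ t)

open Filter Topology in
lemma pyth {X : Type*} [MetricSpace X]
    (hCN : ∀ x y z m : X, dist y m = dist y z / 2 → dist m z = dist y z / 2 →
      dist x m ^ 2 ≤ dist x y ^ 2 / 2 + dist x z ^ 2 / 2 - dist y z ^ 2 / 4)
    (x₀ : X) (c : ℝ → X) (hc : IsRay x₀ c) (a : X) (t₀ : ℝ) (ht₀ : 0 ≤ t₀)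
    (hmin : ∀ t : ℝ, 0 ≤ t → dist a (c t₀) ≤ dist a (c t)) :
    ∀ s : ℝ, 0 ≤ s → dist a (c t₀) ^ 2 + (s - t₀) ^ 2 ≤ dist a (c s) ^ 2 := by
  have key : ∀ n : ℕ, ∀ s : ℝ, 0 ≤ s →
      dist a (c t₀) ^ 2 + (1 - (1/2 : ℝ) ^ n) * (s - t₀) ^ 2 ≤ dist a (c s) ^ 2 := by
    intro n
    induction n with
    | zero =>
      intro s hs
      have := pow_le_pow_left₀ dist_nonneg (hmin s hs) 2
      simpa using this
    | succ n ih =>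
      intro s hs
      set m : ℝ := (t₀ + s) / 2 with hm
      have hm0 : 0 ≤ m := by positivity
      have h1 : dist (c t₀) (c m) = dist (c t₀) (c s) / 2 := by
        rw [hc.2 t₀ m ht₀ hm0, hc.2 t₀ s ht₀ hs,
          show t₀ - m = (t₀ - s) / 2 by rw [hm]; ring, abs_div]
        norm_num
      have h2 : dist (c m) (c s) = dist (c t₀) (c s) / 2 := by
        rw [hc.2 m s hm0 hs, hc.2 t₀ s ht₀ hs,
          show m - s = (t₀ - s) / 2 by rw [hm]; ring, abs_div]
        norm_num
      have hcn := hCN a (c t₀) (c s) (c m) h1 h2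
      have hds : dist (c t₀) (c s) ^ 2 = (s - t₀) ^ 2 := by
        rw [hc.2 t₀ s ht₀ hs, sq_abs]; ring
      rw [hds] at hcn
      have hi := ih m hm0
      have hms : (m - t₀) ^ 2 = (s - t₀) ^ 2 / 4 := by rw [hm]; ring
      rw [hms] at hi
      have hp : ((1:ℝ)/2) ^ (n+1) = (1/2:ℝ) ^ n * (1/2) := pow_succ _ _
      rw [hp]
      nlinarith [hi, hcn]
  intro s hs
  have hT : Tendsto (fun n : ℕ => dist a (c t₀) ^ 2 + (1 - (1/2 : ℝ) ^ n) * (s - t₀) ^ 2)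
      atTop (𝓝 (dist a (c t₀) ^ 2 + (1 - 0) * (s - t₀) ^ 2)) := by
    exact (((tendsto_pow_atTop_nhds_zero_of_lt_one (by norm_num) (by norm_num)).const_sub
      1).mul_const _).const_add _
  have := le_of_tendsto' hT (fun n => key n s hs)
  simpa using this

/-- If `∠(ξ,η) < π/2` then the nearest-point projections `p_i` of `c₂(i)` onto
the ray `c₁` form an unbounded sequence. -/
theorem stmt14 {X : Type*} [MetricSpace X] [CompleteSpace X] (hX : IsCAT0 X)
    (x₀ : X) (c₁ c₂ : ℝ → X) (h₁ : IsRay x₀ c₁) (h₂ : IsRay x₀ c₂)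
    (hangle : angularDist x₀ c₁ c₂ < Real.pi / 2)
    (p : ℕ → X)
    (hproj : ∀ i : ℕ, (∃ t : ℝ, 0 ≤ t ∧ p i = c₁ t) ∧
      ∀ t : ℝ, 0 ≤ t → dist (c₂ i) (p i) ≤ dist (c₂ i) (c₁ t)) :
    ¬ Bornology.IsBounded (Set.range p) := by
  intro hbdd
  obtain ⟨M, hM⟩ := hbdd.subset_closedBall x₀
  have hM0 : 0 ≤ M := by
    have := hM (Set.mem_range_self 0)
    simp only [Metric.mem_closedBall] at this
    exact dist_nonneg.trans this
  have hd₁ : ∀ t : ℝ, 0 ≤ t → dist x₀ (c₁ t) = t := by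
    intro t ht
    rw [← h₁.1, h₁.2 0 t le_rfl ht, abs_of_nonpos (by linarith)]; ring
  have hd₂ : ∀ t : ℝ, 0 ≤ t → dist x₀ (c₂ t) = t := by
    intro t ht
    rw [← h₂.1, h₂.2 0 t le_rfl ht, abs_of_nonpos (by linarith)]; ring
  set α := angularDist x₀ c₁ c₂ with hα
  have hbd : BddAbove (Set.range fun t : {t : ℝ // 0 < t} => compAngle x₀ (c₁ t) (c₂ t)) :=
    ⟨Real.pi, by rintro x ⟨t, rfl⟩; exact Real.arccos_le_pi _⟩
  have hle : ∀ t : ℝ, 0 < t → compAngle x₀ (c₁ t) (c₂ t) ≤ α :=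
    fun t ht => le_ciSup hbd ⟨t, ht⟩
  have hα0 : 0 ≤ α := (Real.arccos_nonneg _).trans (hle 1 one_pos)
  set κ := Real.cos α with hκdef
  have hκpos : 0 < κ := Real.cos_pos_of_mem_Ioo ⟨by linarith [Real.pi_pos], hangle⟩
  have hκ1 : κ ≤ 1 := Real.cos_le_one α
  -- key distance estimate along the rays
  have hd : ∀ t : ℝ, 0 < t → dist (c₁ t) (c₂ t) ^ 2 ≤ 2 * t ^ 2 * (1 - κ) := by
    intro t ht
    have e1 : dist x₀ (c₁ t) = t := hd₁ t ht.le
    have e2 : dist x₀ (c₂ t) = t := hd₂ t ht.le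
    have harc := hle t ht
    simp only [compAngle, e1, e2] at harc
    set d := dist (c₁ t) (c₂ t) with hddef
    have hd0 : 0 ≤ d := dist_nonneg
    have hdle : d ≤ 2 * t := by
      calc d ≤ dist (c₁ t) x₀ + dist x₀ (c₂ t) := dist_triangle _ _ _
      _ = 2 * t := by rw [dist_comm, e1, e2]; ring
    have hr1 : (t ^ 2 + t ^ 2 - d ^ 2) / (2 * t * t) ≤ 1 := by
      rw [div_le_one (by positivity)]; nlinarith
    have hrm1 : (-1 : ℝ) ≤ (t ^ 2 + t ^ 2 - d ^ 2) / (2 * t * t) := by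
      rw [le_div_iff₀ (by positivity)]; nlinarith
    have hcos : κ ≤ (t ^ 2 + t ^ 2 - d ^ 2) / (2 * t * t) := by
      have h := Real.cos_le_cos_of_nonneg_of_le_pi (Real.arccos_nonneg
        ((t ^ 2 + t ^ 2 - d ^ 2) / (2 * t * t)))
        (by linarith [Real.pi_pos]) harc
      rwa [Real.cos_arccos hrm1 hr1] at h
    rw [le_div_iff₀ (by positivity)] at hcos
    nlinarith
  -- choose a large index i
  set δ := 1 - Real.sqrt (1 - κ) with hδdef
  have hsnn : 0 ≤ Real.sqrt (1 - κ) := Real.sqrt_nonneg _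
  have hsq : Real.sqrt (1 - κ) < 1 := by
    calc Real.sqrt (1 - κ) < Real.sqrt 1 := Real.sqrt_lt_sqrt (by linarith) (by linarith)
    _ = 1 := Real.sqrt_one
  have hδpos : 0 < δ := by rw [hδdef]; linarith
  obtain ⟨i, hi⟩ := exists_nat_gt (max 1 (M / δ))
  have hi1 : (1 : ℝ) ≤ i := le_of_lt (lt_of_le_of_lt (le_max_left _ _) hi)
  have hipos : (0 : ℝ) < i := by linarith
  have hiM : M < δ * i := by
    have h := lt_of_le_of_lt (le_max_right _ _) hi
    rw [div_lt_iff₀ hδpos] at h; linarith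
  have hδi : δ * i = (i : ℝ) - Real.sqrt (1 - κ) * i := by rw [hδdef]; ring
  have hsi : 0 ≤ Real.sqrt (1 - κ) * i := mul_nonneg hsnn hipos.le
  -- projection data for index i
  obtain ⟨⟨t, ht0, hpt⟩, hmin⟩ := hproj i
  have htM : t ≤ M := by
    have h := hM (Set.mem_range_self i)
    simp only [Metric.mem_closedBall] at h
    rw [hpt, dist_comm] at h
    rwa [hd₁ t ht0] at h
  have hit : t < (i : ℝ) := by linarith
  have hstrict : Real.sqrt (1 - κ) * i < (i : ℝ) - t := by linarith
  have hmin' : ∀ s : ℝ, 0 ≤ s → dist (c₂ i) (c₁ t) ≤ dist (c₂ i) (c₁ s) := by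
    intro s hs; rw [← hpt]; exact hmin s hs
  have hpy := pyth hX.2 x₀ c₁ h₁ (c₂ i) t ht0 hmin' (i : ℝ) (Nat.cast_nonneg i)
  -- lower bound on dist (c₂ i) (c₁ t)
  have hA : (i : ℝ) - t ≤ dist (c₂ i) (c₁ t) := by
    have htri : dist x₀ (c₂ i) ≤ dist x₀ (c₁ t) + dist (c₁ t) (c₂ i) := dist_triangle _ _ _
    rw [hd₁ t ht0, hd₂ i (Nat.cast_nonneg i), dist_comm (c₁ t)] at htri
    linarith
  have hA2 : ((i : ℝ) - t) ^ 2 ≤ dist (c₂ i) (c₁ t) ^ 2 :=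
    pow_le_pow_left₀ (by linarith) hA 2
  have hup : dist (c₂ i) (c₁ i) ^ 2 ≤ 2 * (i : ℝ) ^ 2 * (1 - κ) := by
    rw [dist_comm]; exact hd i hipos
  have hlow : 2 * ((i : ℝ) - t) ^ 2 ≤ 2 * (i : ℝ) ^ 2 * (1 - κ) := by
    linarith [hpy, hA2, hup]
  have hsqt : (Real.sqrt (1 - κ)) ^ 2 = 1 - κ := Real.sq_sqrt (by linarith)
  nlinarith [hstrict, hlow, hsi, hsqt]
end

section
/- Let X be a complete CAT(0) space, c₁, c₂ geodesic rays from x₀ defining boundary points ξ = [c₁], η = [c₂] with ∠(ξ,η) > π/2. Then the projections p_i of c₂(i) onto c₁ remain in a bounded subset of c₁ as i → ∞. -/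
/-- Maximum principle for continuous midpoint-convex functions on an interval. -/
lemma midpoint_max_principle {f : ℝ → ℝ} {a b : ℝ} (hab : a ≤ b)
    (hc : ContinuousOn f (Set.Icc a b))
    (hm : ∀ u v, u ∈ Set.Icc a b → v ∈ Set.Icc a b → f ((u + v) / 2) ≤ (f u + f v) / 2)
    {x : ℝ} (hx : x ∈ Set.Icc a b) : f x ≤ max (f a) (f b) := by
  set M := max (f a) (f b) with hM
  by_contra hxM
  push_neg at hxM
  set S : Set ℝ := Set.Icc a b ∩ f ⁻¹' Set.Iic M with hS
  have hScl : IsClosed S := hc.preimage_isClosed_of_isClosed isClosed_Icc isClosed_Iic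
  have haS : a ∈ S := ⟨Set.left_mem_Icc.2 hab, by simp only [Set.mem_preimage, Set.mem_Iic, hM]; exact le_max_left _ _⟩
  have hbS : b ∈ S := ⟨Set.right_mem_Icc.2 hab, by simp only [Set.mem_preimage, Set.mem_Iic, hM]; exact le_max_right _ _⟩
  have hxS : x ∉ S := fun h => absurd h.2 (not_le.2 hxM)
  set L : Set ℝ := S ∩ Set.Iic x with hL
  set R : Set ℝ := S ∩ Set.Ici x with hR
  have hLne : L.Nonempty := ⟨a, haS, hx.1⟩
  have hRne : R.Nonempty := ⟨b, hbS, hx.2⟩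
  have hLbdd : BddAbove L := ⟨x, fun y hy => hy.2⟩
  have hRbdd : BddBelow R := ⟨x, fun y hy => hy.2⟩
  set u := sSup L with hu
  set v := sInf R with hv
  have huL : u ∈ L := (hScl.inter isClosed_Iic).csSup_mem hLne hLbdd
  have hvR : v ∈ R := (hScl.inter isClosed_Ici).csInf_mem hRne hRbdd
  have hux : u < x := lt_of_le_of_ne huL.2 (fun h => hxS (h ▸ huL.1))
  have hxv : x < v := lt_of_le_of_ne hvR.2 (fun h => hxS (h.symm ▸ hvR.1))
  set m := (u + v) / 2 with hm'
  have hmS : m ∈ S := by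
    constructor
    · constructor
      · have := huL.1.1.1; have := hvR.1.1.1; simp only [hm']; linarith
      · have := huL.1.1.2; have := hvR.1.1.2; simp only [hm']; linarith
    · exact le_trans (hm u v huL.1.1 hvR.1.1)
        (by have h1 := huL.1.2; have h2 := hvR.1.2; simp only [Set.mem_preimage, Set.mem_Iic] at h1 h2 ⊢; linarith)
  rcases le_or_gt m x with h | h
  · have : m ≤ u := le_csSup hLbdd ⟨hmS, h⟩
    have : u < m := by simp only [hm']; linarith
    linarith
  · have : v ≤ m := csInf_le hRbdd ⟨hmS, h.le⟩
    have : m < v := by simp only [hm']; linarith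
    linarith

/-- Along a geodesic ray in a CAT(0) space, `t ↦ d(q, c t)² - t²` is midpoint convex
on nonnegative parameters. -/
lemma ray_midpoint_convex {X : Type*} [MetricSpace X] (hX : IsCAT0 X)
    {x₀ : X} {c : ℝ → X} (hc : IsRay x₀ c) (q : X) {u v : ℝ} (hu : 0 ≤ u) (hv : 0 ≤ v) :
    dist q (c ((u + v) / 2)) ^ 2 - ((u + v) / 2) ^ 2 ≤
      ((dist q (c u) ^ 2 - u ^ 2) + (dist q (c v) ^ 2 - v ^ 2)) / 2 := by
  have hmid : (0:ℝ) ≤ (u + v) / 2 := by linarith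
  have h1 : dist (c u) (c ((u + v) / 2)) = dist (c u) (c v) / 2 := by
    rw [hc.2 u ((u + v) / 2) hu hmid, hc.2 u v hu hv]
    rw [abs_sub_comm u v, show u - (u + v) / 2 = (v - u) / (-2) by ring, abs_div]
    simp [abs_of_nonpos]
  have h2 : dist (c ((u + v) / 2)) (c v) = dist (c u) (c v) / 2 := by
    rw [hc.2 ((u + v) / 2) v hmid hv, hc.2 u v hu hv]
    rw [abs_sub_comm u v, show (u + v) / 2 - v = (v - u) / (-2) by ring, abs_div]
    simp [abs_of_nonpos]
  have hcn := hX.2 q (c u) (c v) (c ((u + v) / 2)) h1 h2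
  have hd : dist (c u) (c v) = |u - v| := hc.2 u v hu hv
  have : dist (c u) (c v) ^ 2 = (u - v) ^ 2 := by rw [hd, sq_abs]
  nlinarith [hcn, this]

/-- `t ↦ d(q, c t)² - t²` is continuous on `[a, b] ⊆ [0, ∞)`. -/
lemma ray_fun_continuous {X : Type*} [MetricSpace X]
    {x₀ : X} {c : ℝ → X} (hc : IsRay x₀ c) (q : X) {a b : ℝ} (ha : 0 ≤ a) :
    ContinuousOn (fun t => dist q (c t) ^ 2 - t ^ 2) (Set.Icc a b) := by
  have hlip : LipschitzOnWith 1 (fun t => dist q (c t)) (Set.Icc a b) := by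
    apply LipschitzOnWith.of_dist_le_mul
    intro s hs t ht
    have h1 : dist (dist q (c s)) (dist q (c t)) ≤ dist (c s) (c t) := by
      rw [Real.dist_eq, dist_comm q (c s), dist_comm q (c t)]
      exact abs_dist_sub_le _ _ _
    rw [hc.2 s t (ha.trans hs.1) (ha.trans ht.1)] at h1
    simpa [Real.dist_eq] using h1
  exact ((hlip.continuousOn).pow 2).sub ((continuous_pow 2).continuousOn)

/-- Monotonicity consequence: if `f 0 < f t₀` then `f t₀ ≤ f t` for `t ≥ t₀`. -/
lemma midpoint_convex_mono {f : ℝ → ℝ} {t₀ t : ℝ} (ht₀ : 0 ≤ t₀) (ht : t₀ ≤ t)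
    (hc : ContinuousOn f (Set.Icc 0 t))
    (hm : ∀ u v, u ∈ Set.Icc (0:ℝ) t → v ∈ Set.Icc (0:ℝ) t → f ((u + v) / 2) ≤ (f u + f v) / 2)
    (h0 : f 0 < f t₀) : f t₀ ≤ f t := by
  by_contra hlt
  push_neg at hlt
  have := midpoint_max_principle (ht₀.trans ht) hc hm (x := t₀) ⟨ht₀, ht⟩
  rcases max_cases (f 0) (f t) with ⟨he, _⟩ | ⟨he, _⟩ <;> rw [he] at this <;> linarith

/-- If `∠(ξ,η) > π/2` then the nearest-point projections `p_i` of `c₂(i)` onto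
the ray `c₁` remain in a bounded set. -/
theorem stmt15 {X : Type*} [MetricSpace X] [CompleteSpace X] (hX : IsCAT0 X)
    (x₀ : X) (c₁ c₂ : ℝ → X) (h₁ : IsRay x₀ c₁) (h₂ : IsRay x₀ c₂)
    (hangle : angularDist x₀ c₁ c₂ > Real.pi / 2)
    (p : ℕ → X)
    (hproj : ∀ i : ℕ, (∃ t : ℝ, 0 ≤ t ∧ p i = c₁ t) ∧
      ∀ t : ℝ, 0 ≤ t → dist (c₂ i) (p i) ≤ dist (c₂ i) (c₁ t)) :
    Bornology.IsBounded (Set.range p) := by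
  -- Extract a parameter `t₀ > 0` where the comparison angle exceeds `π/2`.
  haveI : Nonempty {t : ℝ // 0 < t} := ⟨⟨1, one_pos⟩⟩
  rw [angularDist] at hangle
  obtain ⟨⟨t₀, ht₀⟩, hgt⟩ := exists_lt_of_lt_ciSup hangle
  simp only at hgt
  -- Basic distances along the rays.
  have hd₁ : ∀ s t : ℝ, 0 ≤ s → 0 ≤ t → dist (c₁ s) (c₁ t) = |s - t| := h₁.2
  have hd₂ : ∀ s t : ℝ, 0 ≤ s → 0 ≤ t → dist (c₂ s) (c₂ t) = |s - t| := h₂.2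
  have hx₁ : ∀ t : ℝ, 0 ≤ t → dist x₀ (c₁ t) = t := fun t ht => by
    rw [← h₁.1, hd₁ 0 t le_rfl ht, abs_sub_comm, sub_zero, abs_of_nonneg ht]
  have hx₂ : ∀ t : ℝ, 0 ≤ t → dist x₀ (c₂ t) = t := fun t ht => by
    rw [← h₂.1, hd₂ 0 t le_rfl ht, abs_sub_comm, sub_zero, abs_of_nonneg ht]
  set D₀ := dist (c₁ t₀) (c₂ t₀) with hD₀
  -- From the angle condition: `D₀² > 2 t₀²`.
  have hcc : D₀ ^ 2 > 2 * t₀ ^ 2 := by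
    rw [compAngle, Real.arccos_eq_pi_div_two_sub_arcsin] at hgt
    have harc : Real.arcsin ((dist x₀ (c₁ t₀) ^ 2 + dist x₀ (c₂ t₀) ^ 2 - D₀ ^ 2) /
        (2 * dist x₀ (c₁ t₀) * dist x₀ (c₂ t₀))) < 0 := by linarith
    have hu : (dist x₀ (c₁ t₀) ^ 2 + dist x₀ (c₂ t₀) ^ 2 - D₀ ^ 2) /
        (2 * dist x₀ (c₁ t₀) * dist x₀ (c₂ t₀)) < 0 := by
      by_contra hge
      push_neg at hge
      exact absurd (Real.arcsin_nonneg.2 hge) (not_le.2 harc)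
    rw [hx₁ t₀ ht₀.le, hx₂ t₀ ht₀.le] at hu
    have hden : (0:ℝ) < 2 * t₀ * t₀ := by positivity
    have := (div_neg_iff.1 hu)
    rcases this with ⟨hnum, _⟩ | ⟨hnum, hden'⟩
    · nlinarith
    · nlinarith
  set C := D₀ ^ 2 - 2 * t₀ ^ 2 with hC
  have hCpos : 0 < C := by rw [hC]; linarith
  -- Step 1: for `t ≥ t₀`, `d(c₁ t₀, c₂ t)² - t² ≥ t₀² + C`.
  have step1 : ∀ t : ℝ, t₀ ≤ t → t ^ 2 + t₀ ^ 2 + C ≤ dist (c₁ t₀) (c₂ t) ^ 2 := by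
    intro t ht
    set g : ℝ → ℝ := fun s => dist (c₁ t₀) (c₂ s) ^ 2 - s ^ 2 with hg
    have hg0 : g 0 = t₀ ^ 2 := by
      simp only [hg, h₂.1]
      rw [dist_comm, hx₁ t₀ ht₀.le]; ring
    have hgt₀ : g t₀ = t₀ ^ 2 + C := by simp only [hg, hC, hD₀]; ring
    have hmono : g t₀ ≤ g t := by
      refine midpoint_convex_mono ht₀.le ht (ray_fun_continuous h₂ (c₁ t₀) le_rfl) ?_ ?_
      · intro u v hu hv
        exact ray_midpoint_convex hX h₂ (c₁ t₀) hu.1 hv.1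
      · rw [hg0, hgt₀]; linarith
    rw [hgt₀] at hmono
    simp only [hg] at hmono
    linarith
  -- Step 2: for `i ≥ t₀` and `s ≥ t₀`, `d(c₂ i, c₁ s)² ≥ s² + i² + C`.
  have step2 : ∀ i : ℕ, t₀ ≤ (i:ℝ) → ∀ s : ℝ, t₀ ≤ s →
      s ^ 2 + (i:ℝ) ^ 2 + C ≤ dist (c₂ i) (c₁ s) ^ 2 := by
    intro i hi s hs
    set g : ℝ → ℝ := fun u => dist (c₂ i) (c₁ u) ^ 2 - u ^ 2 with hg
    have hg0 : g 0 = (i:ℝ) ^ 2 := by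
      simp only [hg, h₁.1]
      rw [dist_comm, hx₂ i (Nat.cast_nonneg i)]; ring
    have hgt₀ : (i:ℝ) ^ 2 + C ≤ g t₀ := by
      have := step1 i hi
      simp only [hg]
      rw [dist_comm]
      linarith
    have hmono : g t₀ ≤ g s := by
      refine midpoint_convex_mono ht₀.le hs (ray_fun_continuous h₁ (c₂ i) le_rfl) ?_ ?_
      · intro u v hu hv
        exact ray_midpoint_convex hX h₁ (c₂ i) hu.1 hv.1
      · rw [hg0]; linarith
    simp only [hg] at hmono hgt₀
    linarith
  -- The projections stay within distance `2 t₀` of `x₀`.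
  have hbd : ∀ i : ℕ, dist (p i) x₀ ≤ 2 * t₀ := by
    intro i
    obtain ⟨⟨s, hs0, hps⟩, hmin⟩ := hproj i
    have hdist : dist (p i) x₀ = s := by
      rw [hps, ← h₁.1, hd₁ s 0 hs0 le_rfl, sub_zero, abs_of_nonneg hs0]
    rw [hdist]
    have hple : dist (c₂ i) (p i) ≤ (i:ℝ) := by
      have := hmin 0 le_rfl
      rw [h₁.1, dist_comm (c₂ i) x₀, hx₂ i (Nat.cast_nonneg i)] at this
      exact this
    by_cases hst : s < t₀
    · linarith
    push_neg at hst
    by_cases hit : (i:ℝ) < t₀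
    · have htri : s ≤ dist x₀ (c₂ i) + dist (c₂ i) (p i) := by
        calc s = dist x₀ (p i) := by rw [dist_comm]; exact hdist.symm
        _ ≤ dist x₀ (c₂ i) + dist (c₂ i) (p i) := dist_triangle _ _ _
      rw [hx₂ i (Nat.cast_nonneg i)] at htri
      linarith
    · push_neg at hit
      exfalso
      have hkey := step2 i hit s hst
      rw [← hps] at hkey
      have hnn : 0 ≤ dist (c₂ i) (p i) := dist_nonneg
      nlinarith
  have hsub : Set.range p ⊆ Metric.closedBall x₀ (2 * t₀) := by
    rintro _ ⟨i, rfl⟩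
    rw [Metric.mem_closedBall, dist_comm]
    rw [dist_comm]
    exact hbd i
  exact Metric.isBounded_closedBall.subset hsub
end
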